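/- Variance of the OUE frequency estimator for an unheld value: in the OUE frequency-estimation setting with ε > 0, domain size d, p = 1/2, q = 1/(e^ε + 1), and n users reporting independently via OUE, if no user holds the value x (i.e., f_x = 0), then the estimator f̂_x = (c_x/n − q)/(p − q) has variance Var[f̂_x] = 4·e^ε/((e^ε − 1)² · n). -/

import Mathlib

open MeasureTheory ProbabilityTheory

/-- Probability that the OUE mechanism on input `x` (one-hot encoding of `x` over the
finite domain `X`, bitwise independent perturbation keeping the 1-bit with probability
`p = 1/2` and flipping each 0-bit to 1 with probability `q = 1/(e^ε + 1)`) outputs the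
binary vector `B' : X → Bool`. -/
noncomputable def oueProb {X : Type*} [Fintype X] [DecidableEq X]
    (ε : ℝ) (x : X) (B' : X → Bool) : ℝ :=
  ∏ i : X,
    if i = x then (if B' i then (1 / 2 : ℝ) else 1 / 2)
    else (if B' i then 1 / (Real.exp ε + 1) else 1 - 1 / (Real.exp ε + 1))

/-!
For a user holding `y ≠ x`, the bit `B'[x]` of the report is Bernoulli(`q`): `oueProb ε y` is a
product of one factor per coordinate, each summing to `1` over `Bool`, so summing over all
reports with `B'[x] = 1` leaves the single factor `q`. Hence `c_x` is a sum of `n` independent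
Bernoulli(`q`) variables and has variance `n q (1 - q)`, while `f̂_x` is affine in `c_x` with
slope `1 / (n (p - q))`. Since `q (1 - q) = e^ε / (e^ε + 1)²` and
`p - q = (e^ε - 1) / (2 (e^ε + 1))`, the variance is `4 e^ε / ((e^ε - 1)² n)`.
-/

open Finset

theorem sum_filter_apply_eq_mul_prod_sum {ι β R : Type*} [Fintype ι] [DecidableEq ι]
    [Fintype β] [DecidableEq β] [CommSemiring R] (f : ι → β → R) (x : ι) (t : β) :
    ∑ b ∈ univ.filter (fun b : ι → β => b x = t), ∏ i, f i (b i)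
      = f x t * ∏ i ∈ univ.erase x, ∑ s, f i s := by
  have hpi : univ.filter (fun b : ι → β => b x = t)
      = Fintype.piFinset (fun i => if i = x then {t} else univ) := by
    ext b
    simp only [mem_filter, mem_univ, true_and, Fintype.mem_piFinset]
    refine ⟨fun hb i => ?_, fun hb => by simpa using hb x⟩
    split_ifs with hi
    · simp [hi, hb]
    · exact mem_univ _
  rw [hpi, ← prod_univ_sum, ← mul_prod_erase univ _ (mem_univ x), if_pos rfl, sum_singleton]
  congr 1
  exact prod_congr rfl fun i hi => by rw [if_neg (ne_of_mem_erase hi)]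

section OUE

variable {X : Type*} [Fintype X] [DecidableEq X]

theorem oueProb_nonneg (ε : ℝ) (y : X) (b : X → Bool) : 0 ≤ oueProb ε y b := by
  have hq : 0 ≤ 1 - 1 / (Real.exp ε + 1) :=
    sub_nonneg.2 ((div_le_one (by positivity)).2 (by linarith [Real.exp_pos ε]))
  refine prod_nonneg fun i _ => ?_
  split_ifs <;> positivity

theorem sum_oueProb_filter_apply_true (ε : ℝ) {x y : X} (hyx : y ≠ x) :
    ∑ b ∈ univ.filter (fun b : X → Bool => b x = true), oueProb ε y b
      = 1 / (Real.exp ε + 1) := by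
  refine (sum_filter_apply_eq_mul_prod_sum (fun i (s : Bool) =>
    if i = y then (if s then (1 / 2 : ℝ) else 1 / 2)
    else (if s then 1 / (Real.exp ε + 1) else 1 - 1 / (Real.exp ε + 1))) x true).trans ?_
  rw [if_neg hyx.symm, if_pos rfl, prod_eq_one, mul_one]
  intro i _
  split_ifs <;> simp

theorem measureReal_apply_eq_true_of_oueProb {Ω : Type*} [MeasurableSpace Ω] {μ : Measure Ω}
    {V : Ω → X → Bool} (hV : Measurable V) {ε : ℝ} {x y : X}
    (hdist : ∀ b, μ {ω | V ω = b} = ENNReal.ofReal (oueProb ε y b)) (hyx : y ≠ x) :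
    μ.real {ω | V ω x = true} = 1 / (Real.exp ε + 1) := by
  have hfiber : ∀ b, μ.real (V ⁻¹' {b}) = oueProb ε y b := fun b => by
    rw [measureReal_def, show V ⁻¹' {b} = {ω | V ω = b} from rfl, hdist,
      ENNReal.toReal_ofReal (oueProb_nonneg ε y b)]
  have hset : {ω | V ω x = true} = V ⁻¹' ↑(univ.filter fun b : X → Bool => b x = true) := by
    ext ω
    simp
  rw [hset, ← sum_measureReal_preimage_singleton _ (fun b _ => hV (measurableSet_singleton b))
    (fun b _ => (hdist b).trans_ne ENNReal.ofReal_ne_top),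
    ← sum_oueProb_filter_apply_true ε hyx]
  exact sum_congr rfl fun b _ => hfiber b

end OUE

section Bernoulli

variable {Ω : Type*} [MeasurableSpace Ω] {μ : Measure Ω} [IsProbabilityMeasure μ]

theorem variance_indicator_one {A : Set Ω} (hA : MeasurableSet A) :
    Var[A.indicator 1; μ] = μ.real A * (1 - μ.real A) := by
  have hsq : A.indicator (1 : Ω → ℝ) ^ 2 = A.indicator 1 := by
    ext ω
    by_cases h : ω ∈ A <;> simp [h]
  have hL2 : MemLp (A.indicator 1) 2 μ := memLp_indicator_const 2 hA (1 : ℝ) (Or.inr (by simp))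
  rw [variance_eq_sub hL2, hsq, integral_indicator_one hA]
  ring

theorem variance_sum_indicator_one {ι : Type*} (s : Finset ι) {A : ι → Set Ω}
    (hA : ∀ i, MeasurableSet (A i)) (hind : iIndepFun (fun i => (A i).indicator (1 : Ω → ℝ)) μ) :
    Var[∑ i ∈ s, (A i).indicator 1; μ] = ∑ i ∈ s, μ.real (A i) * (1 - μ.real (A i)) := by
  rw [IndepFun.variance_sum (X := fun i => (A i).indicator 1)
    (fun i _ => memLp_indicator_const 2 (hA i) (1 : ℝ) (Or.inr (by simp)))
    (fun i _ j _ hij => hind.indepFun hij)]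
  exact sum_congr rfl fun i _ => variance_indicator_one (hA i)

theorem variance_div_sub_div {S : Ω → ℝ} (hS : AEStronglyMeasurable S μ) (a b c : ℝ) :
    Var[fun ω => (S ω / a - b) / c; μ] = Var[S; μ] / (a * c) ^ 2 := by
  simp_rw [div_eq_mul_inv]
  rw [variance_mul_const, variance_sub_const (hS.mul_const _), variance_mul_const]
  ring

end Bernoulli

theorem oue_variance_identity (n : ℕ) (ε : ℝ) {q : ℝ} (hq : q = 1 / (Real.exp ε + 1)) :
    n * (q * (1 - q)) / (n * (1 / 2 - q)) ^ 2 = 4 * Real.exp ε / ((Real.exp ε - 1) ^ 2 * n) := by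
  have he : Real.exp ε + 1 ≠ 0 := by positivity
  subst hq
  field_simp
  ring

theorem oue_estimator_variance_unheld_general {X : Type*} [Fintype X] [DecidableEq X]
    (ε : ℝ)
    (p q : ℝ) (hp : p = 1 / 2) (hq : q = 1 / (Real.exp ε + 1))
    (n : ℕ) (xs : Fin n → X)
    {Ω : Type*} [MeasurableSpace Ω] (μ : Measure Ω) [IsProbabilityMeasure μ]
    (B : Fin n → Ω → (X → Bool)) (hmeas : ∀ j, Measurable (B j))
    (hindep : iIndepFun B μ)
    (hdist : ∀ (j : Fin n) (b : X → Bool),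
      μ {ω | B j ω = b} = ENNReal.ofReal (oueProb ε (xs j) b))
    (x : X) (hx : ∀ j, xs j ≠ x) :
    variance (fun ω =>
        (((Finset.filter (fun j => B j ω x = true) Finset.univ).card : ℝ) / n - q) / (p - q)) μ
      = 4 * Real.exp ε / ((Real.exp ε - 1) ^ 2 * n) := by
  set S : Set (X → Bool) := {b | b x = true}
  have hS : MeasurableSet S := S.to_countable.measurableSet
  have hcount : (fun ω => ((univ.filter fun j => B j ω x = true).card : ℝ))
      = ∑ j, (B j ⁻¹' S).indicator 1 := by
    ext ω
    rw [natCast_card_filter, Finset.sum_apply]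
    simp [Set.indicator_apply, S]
  have hind : iIndepFun (fun j => (B j ⁻¹' S).indicator (1 : Ω → ℝ)) μ := by
    convert hindep.comp (fun _ => S.indicator (1 : (X → Bool) → ℝ))
      (fun _ => measurable_const.indicator hS) using 2 with j
    exact funext fun ω => Set.indicator_comp_right (g := 1) (B j)
  have hmean : ∀ j, μ.real (B j ⁻¹' S) = q := fun j =>
    hq ▸ measureReal_apply_eq_true_of_oueProb (hmeas j) (hdist j) (hx j)
  have hcount_meas : AEMeasurable (∑ j, (B j ⁻¹' S).indicator (1 : Ω → ℝ)) μ :=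
    Finset.aemeasurable_sum _ fun j _ => (measurable_const.indicator (hmeas j hS)).aemeasurable
  rw [variance_div_sub_div (hcount ▸ hcount_meas).aestronglyMeasurable, hcount,
    variance_sum_indicator_one _ (fun j => hmeas j hS) hind]
  simp only [hmean, sum_const, card_univ, Fintype.card_fin, nsmul_eq_mul, hp]
  exact oue_variance_identity n ε hq

/-- Variance of the OUE frequency estimator for an unheld value: with `p = 1/2` and
`q = 1/(e^ε + 1)`, if `n` users independently report via OUE and no user holds the value
`x` (`f_x = 0`), then the estimator `f̂_x = (c_x/n − q)/(p − q)` has variance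
`4·e^ε/((e^ε − 1)²·n)`. -/
theorem oue_estimator_variance_unheld {X : Type*} [Fintype X] [DecidableEq X]
    (ε : ℝ) (hε : 0 < ε)
    (p q : ℝ) (hp : p = 1 / 2) (hq : q = 1 / (Real.exp ε + 1))
    (n : ℕ) (hn : 0 < n) (xs : Fin n → X)
    {Ω : Type*} [MeasurableSpace Ω] (μ : Measure Ω) [IsProbabilityMeasure μ]
    (B : Fin n → Ω → (X → Bool)) (hmeas : ∀ j, Measurable (B j))
    (hindep : iIndepFun B μ)
    (hdist : ∀ (j : Fin n) (b : X → Bool),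
      μ {ω | B j ω = b} = ENNReal.ofReal (oueProb ε (xs j) b))
    (x : X) (hx : ∀ j, xs j ≠ x) :
    variance (fun ω =>
        (((Finset.filter (fun j => B j ω x = true) Finset.univ).card : ℝ) / n - q) / (p - q)) μ
      = 4 * Real.exp ε / ((Real.exp ε - 1) ^ 2 * n) :=
  oue_estimator_variance_unheld_general ε p q hp hq n xs μ B hmeas hindep hdist x hx
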